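/- Let G be a finite abelian group of exponent n, B ⊆ G\{0} with B ∩ (−B) = ∅, and K a subfield of Q(ζ_{4n}). Set H = η(Gal(Q(ζ_{4n})/K)), H_1 = {h ∈ H : h ≡ 1 (mod 4)}, H_2 = {h ∈ H : h ≡ 3 (mod 4)}. Then μ_g = i(χ_g(B) − χ_g(−B)) lies in K for all g ∈ G if and only if hB = B for all h ∈ H_1 and hB = −B for all h ∈ H_2. -/

import Mathlib

open Finset Pointwise Polynomial

/-- The standard isomorphism `η : Gal(ℚ(ζ_m)/ℚ) ≅ (ℤ/mℤ)ˣ`, with `σ ζ_m = ζ_m ^ η σ`. -/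
noncomputable def etaIso (m : ℕ+) :
    (CyclotomicField m ℚ ≃ₐ[ℚ] CyclotomicField m ℚ) ≃* (ZMod (m : ℕ))ˣ :=
  @IsCyclotomicExtension.autEquivPow _ _ _ _ _ _ _ _ (CyclotomicField.isCyclotomicExtension _ _) (Polynomial.cyclotomic.irreducible_rat m.pos)

/-!
Let `h = η(σ)`. Since `σ` raises roots of unity of order dividing `4n` to the `h`-th power,
`σ(χ_g(x)) = χ_g(hx)` and `σ(i) = ±i` according as `h ≡ ±1 (mod 4)`; hence
`σ(μ_g(B)) = μ_g(hB)` or `μ_g(-hB)`. By the Galois correspondence, `μ_g(B) ∈ K` for all `g`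
iff `μ_g(±hB) = μ_g(B)` for all `g` and all `σ` fixing `K`. Now `χ_g(B) - χ_g(-B)` is the
Fourier coefficient of `1_B - 1_{-B}` at `g`, and the `|G|` distinct characters `χ_g` span all
functions `G → ℚ(ζ_{4n})`, so these coefficients determine `1_B - 1_{-B}`, which determines `B`
when `B ∩ -B = ∅`.
-/

theorem linearIndependent_addChar (G F : Type*) [AddMonoid G] [CommRing F] [IsDomain F] :
    LinearIndependent F ((⇑) : AddChar G F → G → F) :=
  (linearIndependent_monoidHom (Multiplicative G) F).comp AddChar.toMonoidHomEquiv
    AddChar.toMonoidHomEquiv.injective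

section Characters

variable {G F : Type*} [AddCommGroup G] [Fintype G] [Field F]

theorem span_range_addChar_eq_top (χ : G → AddChar G F) (hχ : Function.Injective χ) :
    Submodule.span F (Set.range fun g => (χ g : G → F)) = ⊤ :=
  ((linearIndependent_addChar G F).comp χ hχ).span_eq_top_of_card_eq_finrank
    (Module.finrank_fintype_fun_eq_card F).symm

theorem eq_of_forall_sum_mul_addChar_eq (χ : G → AddChar G F) (hχ : Function.Injective χ)
    {a b : G → F} (h : ∀ g, ∑ x, a x * χ g x = ∑ x, b x * χ g x) : a = b := by
  classical
  have hL : Fintype.linearCombination F a = Fintype.linearCombination F b :=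
    LinearMap.ext_on_range (span_range_addChar_eq_top χ hχ) fun g => by
      simpa [Fintype.linearCombination_apply, mul_comm] using h g
  funext y
  simpa using LinearMap.congr_fun hL (Pi.single y 1)

end Characters

section SkewCharSums

variable {G F : Type*} [AddCommGroup G] [DecidableEq G] [Field F]

def skewCharSum (χ : G → AddChar G F) (B : Finset G) (g : G) : F :=
  ∑ b ∈ B, χ g b - ∑ b ∈ B, χ g (-b)

def signedIndicator (B : Finset G) (x : G) : ℤ :=
  (if x ∈ B then 1 else 0) - (if x ∈ -B then 1 else 0)

theorem signedIndicator_eq_one_iff {B : Finset G} (hB : Disjoint B (-B)) (x : G) :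
    signedIndicator B x = 1 ↔ x ∈ B := by
  have hx : x ∈ B → x ∉ -B := fun h => disjoint_left.1 hB h
  unfold signedIndicator
  split_ifs <;> simp_all

theorem skewCharSum_neg (χ : G → AddChar G F) (B : Finset G) (g : G) :
    skewCharSum χ (-B) g = -skewCharSum χ B g := by
  simp only [skewCharSum, sum_neg_index, neg_neg]
  ring

theorem skewCharSum_eq_sum_signedIndicator [Fintype G] (χ : G → AddChar G F) (B : Finset G)
    (g : G) : skewCharSum χ B g = ∑ x, (signedIndicator B x : F) * χ g x := by
  simp only [skewCharSum, signedIndicator, Int.cast_sub, Int.cast_ite, Int.cast_one, Int.cast_zero,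
    sub_mul, ite_mul, one_mul, zero_mul, sum_sub_distrib, sum_ite_mem, univ_inter, sum_neg_index]

theorem forall_skewCharSum_eq_iff [Fintype G] [CharZero F] (χ : G → AddChar G F)
    (hχ : Function.Injective χ) {B B' : Finset G} (hB : Disjoint B (-B)) (hB' : Disjoint B' (-B')) :
    (∀ g, skewCharSum χ B g = skewCharSum χ B' g) ↔ B = B' := by
  refine ⟨fun h => ?_, fun h _ => h ▸ rfl⟩
  have hind : (fun x => (signedIndicator B x : F)) = fun x => (signedIndicator B' x : F) :=
    eq_of_forall_sum_mul_addChar_eq χ hχ fun g => by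
      simpa only [skewCharSum_eq_sum_signedIndicator] using h g
  ext x
  rw [← signedIndicator_eq_one_iff hB, ← signedIndicator_eq_one_iff hB',
    show signedIndicator B x = signedIndicator B' x by exact_mod_cast congrFun hind x]

theorem map_skewCharSum {R : Type*} [FunLike R F F] [AddMonoidHomClass R F F] (φ : R)
    (χ : G → AddChar G F) {k : ℕ} (hk : Function.Injective fun x : G => k • x)
    (hφ : ∀ g x, φ (χ g x) = χ g (k • x)) (B : Finset G) (g : G) :
    φ (skewCharSum χ B g) = skewCharSum χ (B.image fun b => k • b) g := by
  simp [skewCharSum, sum_image hk.injOn, hφ]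

theorem disjoint_image_nsmul_neg {B : Finset G} (hB : Disjoint B (-B)) {k : ℕ}
    (hk : Function.Injective fun x : G => k • x) :
    Disjoint (B.image fun b => k • b) (-B.image fun b => k • b) := by
  rwa [← image_neg_eq_neg, image_image, show (Neg.neg ∘ fun b : G => k • b) =
    (fun b => k • b) ∘ Neg.neg from funext fun b => (smul_neg k b).symm, ← image_image,
    image_neg_eq_neg, disjoint_image hk]

theorem forall_map_mul_skewCharSum_eq_iff [Fintype G] [CharZero F] {R : Type*} [FunLike R F F]
    [RingHomClass R F F] (σ : R) (χ : G → AddChar G F) (hχ : Function.Injective χ) {ι : F}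
    (hι : ι ^ 2 = -1) {B : Finset G} (hB : Disjoint B (-B)) {k : ℕ}
    (hk : Function.Injective fun x : G => k • x) (hk4 : k % 4 = 1 ∨ k % 4 = 3)
    (hσχ : ∀ g x, σ (χ g x) = χ g (k • x)) (hσι : σ ι = ι ^ k) :
    (∀ g, σ (ι * skewCharSum χ B g) = ι * skewCharSum χ B g) ↔
      (k % 4 = 1 → B.image (fun b => k • b) = B) ∧ (k % 4 = 3 → B.image (fun b => k • b) = -B) := by
  have hι0 : ι ≠ 0 := by rintro rfl; norm_num at hι
  have hσμ (g : G) : σ (ι * skewCharSum χ B g) =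
      ι ^ (k % 4) * skewCharSum χ (B.image fun b => k • b) g := by
    rw [map_mul, hσι, pow_eq_pow_mod k (by rw [pow_mul ι 2 2, hι]; norm_num),
      map_skewCharSum σ χ hk hσχ]
  have hkB := disjoint_image_nsmul_neg hB hk
  simp_rw [hσμ]
  rcases hk4 with h1 | h3
  · simp only [h1, pow_one, mul_right_inj' hι0, forall_skewCharSum_eq_iff χ hχ hkB hB]
    simp
  · have hι3 : ι ^ 3 = -ι := by rw [pow_succ, hι, neg_one_mul]
    have hkB' : Disjoint (-B.image fun b => k • b) (-(-B.image fun b => k • b)) := by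
      rwa [neg_neg, disjoint_comm]
    simp only [h3, hι3, neg_mul, ← mul_neg, ← skewCharSum_neg, mul_right_inj' hι0,
      forall_skewCharSum_eq_iff χ hχ hkB' hB, neg_eq_iff_eq_neg]
    simp

end SkewCharSums

theorem nsmul_injective_of_coprime {G : Type*} [AddCommGroup G] {m k : ℕ}
    (hm : AddMonoid.exponent G ∣ m) (hk : k.Coprime m) : Function.Injective fun x : G => k • x := by
  refine (injective_iff_map_eq_zero (nsmulAddMonoidHom (α := G) k)).2 fun z hz => ?_
  have hord : addOrderOf z ∣ k.gcd m :=
    Nat.dvd_gcd (addOrderOf_dvd_of_nsmul_eq_zero hz) ((AddMonoid.addOrder_dvd_exponent z).trans hm)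
  rwa [hk, Nat.dvd_one, AddMonoid.addOrderOf_eq_one_iff] at hord

theorem AddChar.pow_eq_one_of_exponent_dvd {G M : Type*} [AddMonoid G] [Monoid M]
    (ψ : AddChar G M) {m : ℕ} (hm : AddMonoid.exponent G ∣ m) (x : G) : ψ x ^ m = 1 := by
  obtain ⟨c, rfl⟩ := hm
  rw [pow_mul, ← AddChar.map_nsmul_eq_pow, AddMonoid.exponent_nsmul_eq_zero,
    AddChar.map_zero_eq_one, one_pow]

theorem mod_four_eq_one_or_three_of_coprime {k n : ℕ} (hk : k.Coprime (4 * n)) :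
    k % 4 = 1 ∨ k % 4 = 3 := by
  have hodd : ¬ 2 ∣ k := fun h2 =>
    absurd (Nat.eq_one_of_dvd_one (hk ▸ Nat.dvd_gcd h2 (Dvd.intro (2 * n) (by ring)))) (by norm_num)
  omega

theorem IsGalois.mem_iff_forall_fixingSubgroup {F E : Type*} [Field F] [Field E] [Algebra F E]
    [FiniteDimensional F E] [IsGalois F E] (K : IntermediateField F E) (x : E) :
    x ∈ K ↔ ∀ σ ∈ K.fixingSubgroup, σ x = x := by
  conv_lhs => rw [← IsGalois.fixedField_fixingSubgroup K]
  exact IntermediateField.mem_fixedField_iff _ _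

theorem algEquiv_apply_eq_pow_etaIso (m : ℕ+) (σ : CyclotomicField m ℚ ≃ₐ[ℚ] CyclotomicField m ℚ)
    {α : CyclotomicField m ℚ} (hα : α ^ (m : ℕ) = 1) :
    σ α = α ^ (etaIso m σ : ZMod (m : ℕ)).val := by
  have : NeZero (m : ℕ) := ⟨m.ne_zero⟩
  have : IsCyclotomicExtension {(m : ℕ)} ℚ (CyclotomicField m ℚ) :=
    CyclotomicField.isCyclotomicExtension _ _
  have hζ := IsCyclotomicExtension.zeta_spec m ℚ (CyclotomicField m ℚ)
  obtain ⟨k, -, rfl⟩ := hζ.eq_pow_of_pow_eq_one hα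
  rw [map_pow, ← pow_mul, mul_comm, pow_mul]
  exact congrArg (· ^ k) (hζ.autToPow_spec ℚ σ).symm

theorem mu_mem_iff_stabilizes_general (n : ℕ+) {G : Type*} [AddCommGroup G]
    [Fintype G] [DecidableEq G]
    (hexp : AddMonoid.exponent G = n)
    (χ : G → AddChar G (CyclotomicField (4 * n) ℚ))
    (hinj : Function.Injective χ)
    (ι : CyclotomicField (4 * n) ℚ) (hι : ι ^ 2 = -1)
    (B : Finset G) (hB : B ∩ -B = ∅)
    (K : IntermediateField ℚ (CyclotomicField (4 * n) ℚ)) :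
    (∀ g : G, (ι * ((∑ b ∈ B, χ g b) - ∑ b ∈ B, χ g (-b))) ∈ K) ↔
      ∀ σ ∈ K.fixingSubgroup,
        (((etaIso (4 * n)) σ : ZMod ((4 * n : ℕ+) : ℕ)).val % 4 = 1 →
          B.image (fun b =>
            (((etaIso (4 * n)) σ : ZMod ((4 * n : ℕ+) : ℕ)).val • b)) = B) ∧
        (((etaIso (4 * n)) σ : ZMod ((4 * n : ℕ+) : ℕ)).val % 4 = 3 →
          B.image (fun b =>
            (((etaIso (4 * n)) σ : ZMod ((4 * n : ℕ+) : ℕ)).val • b)) = -B) := by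
  have : NeZero (4 * (n : ℕ)) := ⟨by positivity⟩
  have : IsCyclotomicExtension {4 * (n : ℕ)} ℚ (CyclotomicField (4 * n) ℚ) :=
    CyclotomicField.isCyclotomicExtension _ _
  have := IsCyclotomicExtension.isGalois {4 * (n : ℕ)} ℚ (CyclotomicField (4 * n) ℚ)
  have := IsCyclotomicExtension.finiteDimensional {4 * (n : ℕ)} ℚ (CyclotomicField (4 * n) ℚ)
  have hexp4 : AddMonoid.exponent G ∣ ((4 * n : ℕ+) : ℕ) := hexp ▸ Dvd.intro_left 4 rfl
  have hι4n : ι ^ ((4 * n : ℕ+) : ℕ) = 1 := by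
    rw [show ((4 * n : ℕ+) : ℕ) = 2 * (2 * n) by simp; ring, pow_mul, hι]
    simp
  have key (σ : CyclotomicField (4 * n) ℚ ≃ₐ[ℚ] CyclotomicField (4 * n) ℚ) :=
    have hk := ZMod.val_coe_unit_coprime (etaIso (4 * n) σ)
    forall_map_mul_skewCharSum_eq_iff σ χ hinj hι (disjoint_iff_inter_eq_empty.2 hB)
      (nsmul_injective_of_coprime hexp4 hk) (mod_four_eq_one_or_three_of_coprime hk)
      (fun g x => (algEquiv_apply_eq_pow_etaIso (4 * n) σ
        ((χ g).pow_eq_one_of_exponent_dvd hexp4 x)).trans (AddChar.map_nsmul_eq_pow _ _ _).symm)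
      (algEquiv_apply_eq_pow_etaIso (4 * n) σ hι4n)
  simp_rw [IsGalois.mem_iff_forall_fixingSubgroup K]
  exact ⟨fun h σ hσ => (key σ).1 fun g => h g σ hσ, fun h g σ hσ => (key σ).2 (h σ hσ) g⟩

theorem mu_mem_iff_stabilizes (n : ℕ+) {G : Type*} [AddCommGroup G]
    [Fintype G] [DecidableEq G]
    (hexp : AddMonoid.exponent G = n)
    (χ : G → AddChar G (CyclotomicField (4 * n) ℚ))
    (hmul : ∀ g h x : G, χ (g + h) x = χ g x * χ h x)
    (hinj : Function.Injective χ)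
    (ι : CyclotomicField (4 * n) ℚ) (hι : ι ^ 2 = -1)
    (B : Finset G) (hB0 : (0 : G) ∉ B) (hB : B ∩ -B = ∅)
    (K : IntermediateField ℚ (CyclotomicField (4 * n) ℚ)) :
    (∀ g : G, (ι * ((∑ b ∈ B, χ g b) - ∑ b ∈ B, χ g (-b))) ∈ K) ↔
      ∀ σ ∈ K.fixingSubgroup,
        (((etaIso (4 * n)) σ : ZMod ((4 * n : ℕ+) : ℕ)).val % 4 = 1 →
          B.image (fun b =>
            (((etaIso (4 * n)) σ : ZMod ((4 * n : ℕ+) : ℕ)).val • b)) = B) ∧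
        (((etaIso (4 * n)) σ : ZMod ((4 * n : ℕ+) : ℕ)).val % 4 = 3 →
          B.image (fun b =>
            (((etaIso (4 * n)) σ : ZMod ((4 * n : ℕ+) : ℕ)).val • b)) = -B) :=
  mu_mem_iff_stabilizes_general n hexp χ hinj ι hι B hB K
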